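/- (Security of quantum access control) Let 𝕊 be a quantum system with structured states over a finite set N of locations, let ↝ be a policy, let (read, alter) be an access control matrix satisfying ↝, let θ, ε ≥ 0, and let t ≥ 0 be a natural number. Suppose the Reference Monitor Assumptions hold: for all agents a ∈ A, commands c ∈ C, reachable density operators ρ, σ, and all K ⊆ N, (RM1) d_a(ρ,σ) ≤ δ_a(ρ,σ) + θ; (RM2) if Dis(ρ, 𝓔_{a,c}(ρ) | ε, K) or Dis(σ, 𝓔_{a,c}(σ) | ε, K), then ¬Dis(𝓔_{a,c}(ρ), 𝓔_{a,c}(σ) | δ_a(ρ,σ), K); (RM3) if Dis(ρ, 𝓔_{a,c}(ρ) | ε, K) then there exists L ∈ alter(a) with K ∩ L ≠ ∅. Then K_t(𝕊, ↝) ≤ θ + 2tε. -/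

import Mathlib

open scoped Classical ComplexOrder
open Matrix Kronecker

noncomputable section

/-- A density operator: positive semidefinite with trace 1. -/
def IsDensity {d : Type} [Fintype d] [DecidableEq d] (ρ : Matrix d d ℂ) : Prop :=
  ρ.PosSemidef ∧ ρ.trace = 1

/-- A super-operator: a linear, positive, trace-preserving map on matrices. -/
def IsSuperOp {d : Type} [Fintype d] [DecidableEq d]
    (F : Matrix d d ℂ → Matrix d d ℂ) : Prop :=
  IsLinearMap ℂ F ∧ (∀ ρ : Matrix d d ℂ, ρ.PosSemidef → (F ρ).PosSemidef) ∧
    (∀ ρ : Matrix d d ℂ, (F ρ).trace = ρ.trace)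

/-- A finite family of matrices (the data of a measurement). -/
structure PMeas (d : Type) where
  m : ℕ
  E : Fin m → Matrix d d ℂ

/-- The family is a POVM: positive semidefinite elements summing to the identity. -/
def PMeas.IsPOVM {d : Type} [Fintype d] [DecidableEq d] (P : PMeas d) : Prop :=
  (∀ i, (P.E i).PosSemidef) ∧ ∑ i, P.E i = 1

/-- The distance between outcome distributions of a measurement on two states. -/
def dE {d : Type} [Fintype d] (P : PMeas d) (ρ σ : Matrix d d ℂ) : ℝ :=
  (1 / 2) * ∑ i, ‖(P.E i * ρ).trace - (P.E i * σ).trace‖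

/-- The measurement pseudo-distance induced by a set of measurements. -/
def dM {d : Type} [Fintype d] (M : Set (PMeas d)) (ρ σ : Matrix d d ℂ) : ℝ :=
  sSup { x | ∃ P ∈ M, x = dE P ρ σ }

/-- A quantum system: initial state, agents, commands, super-operators, measurements. -/
structure QSystem (Agent Cmd d : Type) where
  ρ0 : Matrix d d ℂ
  A : Set Agent
  C : Set Cmd
  Ecmd : Agent → Cmd → Matrix d d ℂ → Matrix d d ℂ
  M : Agent → Set (PMeas d)

/-- Well-formedness: the initial state is a density operator, commands act as
super-operators, and agents measure with POVMs. -/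
def QSystem.WellFormed {Agent Cmd d : Type} [Fintype d] [DecidableEq d]
    (S : QSystem Agent Cmd d) : Prop :=
  IsDensity S.ρ0 ∧ (∀ a ∈ S.A, ∀ c ∈ S.C, IsSuperOp (S.Ecmd a c)) ∧
    (∀ a ∈ S.A, ∀ P ∈ S.M a, P.IsPOVM)

/-- Execution of a finite action sequence (composition of super-operators, in order). -/
def QSystem.run {Agent Cmd d : Type} (S : QSystem Agent Cmd d)
    (α : List (Agent × Cmd)) (ρ : Matrix d d ℂ) : Matrix d d ℂ :=
  α.foldl (fun τ p => S.Ecmd p.1 p.2 τ) ρ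

/-- A sequence over A × C. -/
def QSystem.Valid {Agent Cmd d : Type} (S : QSystem Agent Cmd d)
    (α : List (Agent × Cmd)) : Prop :=
  ∀ p ∈ α, p.1 ∈ S.A ∧ p.2 ∈ S.C

/-- `purge G D α` deletes from `α` every pair `(a, c)` with `a ∈ G` and `c ∈ D`. -/
def purge {Agent Cmd : Type} (G : Set Agent) (D : Set Cmd) :
    List (Agent × Cmd) → List (Agent × Cmd)
  | [] => []
  | p :: rest => if p.1 ∈ G ∧ p.2 ∈ D then purge G D rest else p :: purge G D rest

/-- A reachable density operator. -/
def QSystem.Reachable {Agent Cmd d : Type} (S : QSystem Agent Cmd d)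
    (ρ : Matrix d d ℂ) : Prop :=
  ∃ α, S.Valid α ∧ S.run α S.ρ0 = ρ

/-- `∇ a`: the set of agents from which information may not flow to `a`. -/
def nabla {Agent : Type} (pol : Agent → Agent → Prop) (a : Agent) : Set Agent :=
  { b | ¬ pol b a }

/-- The security degree `K(𝕊,↝)`. -/
def Kdeg {Agent Cmd d : Type} [Fintype d] (S : QSystem Agent Cmd d)
    (pol : Agent → Agent → Prop) : ℝ :=
  sSup { x | ∃ a ∈ S.A, ∃ α, S.Valid α ∧
    x = dM (S.M a) (S.run α S.ρ0) (S.run (purge (nabla pol a) Set.univ α) S.ρ0) }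

/-- The `t`-bounded security degree `K_t(𝕊,↝)`. -/
def Kt {Agent Cmd d : Type} [Fintype d] (S : QSystem Agent Cmd d)
    (pol : Agent → Agent → Prop) (t : ℕ) : ℝ :=
  sSup { x | ∃ a ∈ S.A, ∃ α, S.Valid α ∧ α.length ≤ t ∧
    x = dM (S.M a) (S.run α S.ρ0) (S.run (purge (nabla pol a) Set.univ α) S.ρ0) }

/-- The interference degree `Int(G₁, D | G₂)`. -/
def IntDeg {Agent Cmd d : Type} [Fintype d] (S : QSystem Agent Cmd d)
    (G1 : Set Agent) (D : Set Cmd) (G2 : Set Agent) : ℝ :=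
  sSup { x | ∃ a ∈ G2, ∃ α, S.Valid α ∧
    x = dM (S.M a) (S.run α S.ρ0) (S.run (purge G1 D α) S.ρ0) }

/-- Trace distance `d(ρ,σ) = (1/2)·tr √((ρ−σ)†(ρ−σ))`. -/
def traceDist {d : Type} [Fintype d] [DecidableEq d] (ρ σ : Matrix d d ℂ) : ℝ :=
  (1 / 2) * (((Matrix.posSemidef_conjTranspose_mul_self (ρ - σ)).1.eigenvectorUnitary.1 *
    diagonal (((↑) : ℝ → ℂ) ∘ Real.sqrt ∘ (Matrix.posSemidef_conjTranspose_mul_self (ρ - σ)).1.eigenvalues) *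
    (star (Matrix.posSemidef_conjTranspose_mul_self (ρ - σ)).1.eigenvectorUnitary :
      Matrix d d ℂ)).trace).re

end
noncomputable section

variable {N : Type} [Fintype N] [DecidableEq N] {ι : N → Type}
  [∀ n, Fintype (ι n)] [∀ n, DecidableEq (ι n)]

/-- Glue an assignment on `K` and an assignment on `Kᶜ` into a global assignment. -/
def glue (K : Finset N) (u : (n : K) → ι n.1) (w : (n : (Kᶜ : Finset N)) → ι n.1) :
    (n : N) → ι n :=
  fun n => if h : n ∈ K then u ⟨n, h⟩ else w ⟨n, Finset.mem_compl.mpr h⟩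

/-- Partial trace `tr_{N∖K}`: trace out the locations outside `K`. -/
def ptrOut (K : Finset N) (ρ : Matrix ((n : N) → ι n) ((n : N) → ι n) ℂ) :
    Matrix ((n : K) → ι n.1) ((n : K) → ι n.1) ℂ :=
  Matrix.of fun u v =>
    ∑ w : (n : (Kᶜ : Finset N)) → ι n.1, ρ (glue K u w) (glue K v w)

/-- A below-closed family of sets of locations. -/
def BelowClosed {N : Type} (B : Set (Finset N)) : Prop :=
  ∀ K ∈ B, ∀ L ⊆ K, L ∈ B

/-- The pseudo-distance `δ_a(ρ,σ) = sup_{K ∈ read(a)} d(tr_{N∖K}(ρ), tr_{N∖K}(σ))`. -/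
def deltaRead {Agent : Type} (read : Agent → Set (Finset N)) (a : Agent)
    (ρ σ : Matrix ((n : N) → ι n) ((n : N) → ι n) ℂ) : ℝ :=
  sSup { x | ∃ K ∈ read a, x = traceDist (ptrOut K ρ) (ptrOut K σ) }

/-- `Dis(ρ,σ | ε, K)`: `ρ` and `σ` are `ε`-discriminable on `K`. -/
def Dis (K : Finset N) (ε : ℝ)
    (ρ σ : Matrix ((n : N) → ι n) ((n : N) → ι n) ℂ) : Prop :=
  traceDist (ptrOut K ρ) (ptrOut K σ) > ε

/-- The access control matrix `(read, alter)` satisfies the policy `↝`. -/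
def ACMSatisfies {Agent N : Type} (A : Set Agent) (pol : Agent → Agent → Prop)
    (read alter : Agent → Set (Finset N)) : Prop :=
  (∀ a ∈ A, ∀ b ∈ A, pol a b → read a ⊆ read b) ∧
  (∀ a ∈ A, ∀ b ∈ A, (∃ K ∈ read a, ∃ L ∈ alter b, (K ∩ L).Nonempty) → pol b a)

end

/-!
For Hermitian `M` the trace norm is `max_S Re tr (S M)` over unitaries `S` (attained at
`S = U diag(sign λ) U*` in an eigenbasis of `M`), so it is subadditive and the trace distance
satisfies the triangle inequality on Hermitian matrices.

Fix an agent `a`. Along an action sequence `α`, compare the run of `α` with the run of its purge,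
marginal by marginal on every `K ∈ read a`. An action of an agent `b` that may not flow to `a`
moves the marginal on `K` by at most `ε`: otherwise (RM3) gives `L ∈ alter b` meeting `K`, and the
access control matrix forces `b ↝ a`. An action of an agent `b ↝ a` either moves both marginals by
at most `ε`, or, by (RM2), leaves them at most `δ_b ≤ δ_a` apart, because `read b ⊆ read a`.
Each step thus costs at most `2ε`, so `δ_a ≤ 2|α|ε` at the end, and (RM1) adds `θ`.
-/

noncomputable section

namespace Matrix

variable {n : Type} [Fintype n] [DecidableEq n]

def traceNorm (M : Matrix n n ℂ) : ℝ :=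
  (cfc Real.sqrt (Mᴴ * M)).trace.re

lemma traceNorm_neg (M : Matrix n n ℂ) : traceNorm (-M) = traceNorm M := by
  simp [traceNorm]

lemma traceNorm_zero : traceNorm (0 : Matrix n n ℂ) = 0 := by
  simp [traceNorm]

lemma IsHermitian.trace_cfc {M : Matrix n n ℂ} (hM : M.IsHermitian) (f : ℝ → ℝ) :
    (cfc f M).trace = ∑ i, (f (hM.eigenvalues i) : ℂ) := by
  rw [hM.cfc_eq, IsHermitian.cfc, Unitary.conjStarAlgAut_apply, trace_mul_cycle,
    Unitary.coe_star_mul_self, one_mul, trace_diagonal]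
  rfl

lemma IsHermitian.traceNorm_eq_sum_abs_eigenvalues {M : Matrix n n ℂ} (hM : M.IsHermitian) :
    traceNorm M = ∑ i, |hM.eigenvalues i| := by
  have hsq : Mᴴ * M = cfc (fun x : ℝ => x * x) M := by
    rw [hM.eq, cfc_mul (fun x : ℝ => x) (fun x : ℝ => x) M, cfc_id' ℝ M]
  have habs : cfc Real.sqrt (Mᴴ * M) = cfc (fun x : ℝ => |x|) M := by
    rw [hsq, ← cfc_comp Real.sqrt (fun x : ℝ => x * x) M]
    simp only [Function.comp_def, Real.sqrt_mul_self_eq_abs]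
  rw [traceNorm, habs, hM.trace_cfc, Complex.re_sum]
  simp

lemma IsHermitian.trace_mul_eq_sum {M : Matrix n n ℂ} (hM : M.IsHermitian) (X : Matrix n n ℂ) :
    (X * M).trace = ∑ i, (star (hM.eigenvectorUnitary : Matrix n n ℂ) * X *
      (hM.eigenvectorUnitary : Matrix n n ℂ)) i i * hM.eigenvalues i := by
  conv_lhs => rw [hM.spectral_theorem, Unitary.conjStarAlgAut_apply, ← mul_assoc, ← mul_assoc,
    trace_mul_cycle, ← mul_assoc]
  simp [trace, mul_diagonal]

lemma IsHermitian.re_trace_mul_le_traceNorm {M S : Matrix n n ℂ} (hM : M.IsHermitian)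
    (hS : S ∈ unitaryGroup n ℂ) : (S * M).trace.re ≤ traceNorm M := by
  set U := (hM.eigenvectorUnitary : Matrix n n ℂ)
  have hV : star U * S * U ∈ unitaryGroup n ℂ :=
    mul_mem (mul_mem (Unitary.star_mem hM.eigenvectorUnitary.2) hS) hM.eigenvectorUnitary.2
  rw [hM.trace_mul_eq_sum, hM.traceNorm_eq_sum_abs_eigenvalues, Complex.re_sum]
  refine Finset.sum_le_sum fun i _ => ?_
  calc ((star U * S * U) i i * hM.eigenvalues i).re
      ≤ ‖(star U * S * U) i i * hM.eigenvalues i‖ := Complex.re_le_norm _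
    _ = ‖(star U * S * U) i i‖ * |hM.eigenvalues i| := by simp
    _ ≤ |hM.eigenvalues i| :=
      mul_le_of_le_one_left (abs_nonneg _) (entry_norm_bound_of_unitary hV i i)

lemma IsHermitian.exists_re_trace_mul_eq_traceNorm {M : Matrix n n ℂ} (hM : M.IsHermitian) :
    ∃ S ∈ unitaryGroup n ℂ, (S * M).trace.re = traceNorm M := by
  set U := (hM.eigenvectorUnitary : Matrix n n ℂ)
  have hU : star U * U = 1 := Unitary.coe_star_mul_self _
  set s : n → ℂ := fun i => if 0 ≤ hM.eigenvalues i then 1 else -1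
  have hs : diagonal s ∈ unitaryGroup n ℂ := by
    rw [mem_unitaryGroup_iff', star_eq_conjTranspose, diagonal_conjTranspose,
      diagonal_mul_diagonal, ← diagonal_one]
    congr 1
    funext i
    by_cases h : 0 ≤ hM.eigenvalues i <;> simp [s, h]
  refine ⟨U * diagonal s * star U,
    mul_mem (mul_mem hM.eigenvectorUnitary.2 hs) (Unitary.star_mem hM.eigenvectorUnitary.2), ?_⟩
  have hconj : star U * (U * diagonal s * star U) * U = diagonal s := by
    simp only [← mul_assoc, hU, one_mul]
    rw [mul_assoc, hU, mul_one]
  rw [hM.trace_mul_eq_sum, hconj, hM.traceNorm_eq_sum_abs_eigenvalues, Complex.re_sum]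
  refine Finset.sum_congr rfl fun i _ => ?_
  by_cases h : 0 ≤ hM.eigenvalues i
  · simp [s, h, abs_of_nonneg h]
  · simp [s, h, abs_of_neg (not_le.1 h)]

lemma IsHermitian.traceNorm_add_le {A B : Matrix n n ℂ} (hA : A.IsHermitian)
    (hB : B.IsHermitian) : traceNorm (A + B) ≤ traceNorm A + traceNorm B := by
  obtain ⟨S, hS, hSAB⟩ := (hA.add hB).exists_re_trace_mul_eq_traceNorm
  rw [← hSAB, mul_add, trace_add, Complex.add_re]
  exact add_le_add (hA.re_trace_mul_le_traceNorm hS) (hB.re_trace_mul_le_traceNorm hS)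

end Matrix

section TraceDistance

variable {n : Type} [Fintype n] [DecidableEq n]

lemma traceDist_eq_traceNorm (A B : Matrix n n ℂ) :
    traceDist A B = 1 / 2 * traceNorm (A - B) := by
  rw [traceDist, traceNorm, (posSemidef_conjTranspose_mul_self (A - B)).1.cfc_eq,
    IsHermitian.cfc, Unitary.conjStarAlgAut_apply]
  rfl

lemma traceDist_comm (A B : Matrix n n ℂ) : traceDist A B = traceDist B A := by
  rw [traceDist_eq_traceNorm, traceDist_eq_traceNorm, ← traceNorm_neg, neg_sub]

lemma traceDist_self (A : Matrix n n ℂ) : traceDist A A = 0 := by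
  rw [traceDist_eq_traceNorm, sub_self, traceNorm_zero, mul_zero]

lemma traceDist_triangle {A B C : Matrix n n ℂ} (hA : A.IsHermitian) (hB : B.IsHermitian)
    (hC : C.IsHermitian) : traceDist A C ≤ traceDist A B + traceDist B C := by
  simp only [traceDist_eq_traceNorm]
  have := (hA.sub hB).traceNorm_add_le (hB.sub hC)
  rw [sub_add_sub_cancel] at this
  linarith

lemma traceDist_le_of_le_of_le {A A' B B' : Matrix n n ℂ} (hA : A.IsHermitian)
    (hA' : A'.IsHermitian) (hB : B.IsHermitian) (hB' : B'.IsHermitian) {r s t : ℝ}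
    (hAA' : traceDist A A' ≤ r) (hAB : traceDist A B ≤ s) (hBB' : traceDist B B' ≤ t) :
    traceDist A' B' ≤ r + s + t :=
  calc traceDist A' B' ≤ traceDist A' A + (traceDist A B + traceDist B B') :=
        (traceDist_triangle hA' hA hB').trans
          (add_le_add_right (traceDist_triangle hA hB hB') _)
    _ ≤ r + s + t := by rw [traceDist_comm A']; linarith

end TraceDistance

section AccessControl

variable {Agent N : Type} [Fintype N] [DecidableEq N] {ι : N → Type} [∀ n, Fintype (ι n)]

lemma Matrix.IsHermitian.ptrOut (K : Finset N)
    {ρ : Matrix ((n : N) → ι n) ((n : N) → ι n) ℂ} (hρ : ρ.IsHermitian) :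
    (ptrOut K ρ).IsHermitian := by
  ext u v
  simp only [conjTranspose_apply, _root_.ptrOut, of_apply, star_sum]
  exact Finset.sum_congr rfl fun w _ => by rw [← conjTranspose_apply, hρ.eq]

variable [∀ n, DecidableEq (ι n)] {A : Set Agent} {pol : Agent → Agent → Prop}
  {read alter : Agent → Set (Finset N)} {a b : Agent} {K : Finset N} {ε D : ℝ}
  {ρ σ ρ' σ' : Matrix ((n : N) → ι n) ((n : N) → ι n) ℂ}

lemma deltaRead_le (hD : 0 ≤ D) (h : ∀ K ∈ read a, traceDist (ptrOut K ρ) (ptrOut K σ) ≤ D) :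
    deltaRead read a ρ σ ≤ D :=
  Real.sSup_le (by rintro x ⟨K, hK, rfl⟩; exact h K hK) hD

lemma traceDist_ptrOut_le_of_not_flow (hacm : ACMSatisfies A pol read alter) (ha : a ∈ A)
    (hb : b ∈ A) (hba : ¬ pol b a) (hK : K ∈ read a)
    (hRM3 : Dis K ε ρ ρ' → ∃ L ∈ alter b, (K ∩ L).Nonempty) :
    traceDist (ptrOut K ρ) (ptrOut K ρ') ≤ ε :=
  not_lt.1 fun hdis => by
    obtain ⟨L, hL, x, hx⟩ := hRM3 hdis
    -- `ACMSatisfies` intersects with the classical decidable equality on `N`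
    exact hba (hacm.2 a ha b hb ⟨K, hK, L, hL, x, by simpa using hx⟩)

lemma traceDist_ptrOut_step_le_of_flow (hba : read b ⊆ read a) (hε : 0 ≤ ε) (hD : 0 ≤ D)
    (hρ : ρ.IsHermitian) (hσ : σ.IsHermitian) (hρ' : ρ'.IsHermitian) (hσ' : σ'.IsHermitian)
    (hinv : ∀ K ∈ read a, traceDist (ptrOut K ρ) (ptrOut K σ) ≤ D) (hK : K ∈ read a)
    (hRM2 : Dis K ε ρ ρ' ∨ Dis K ε σ σ' → ¬ Dis K (deltaRead read b ρ σ) ρ' σ') :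
    traceDist (ptrOut K ρ') (ptrOut K σ') ≤ D + 2 * ε := by
  by_cases hdis : Dis K ε ρ ρ' ∨ Dis K ε σ σ'
  · calc traceDist (ptrOut K ρ') (ptrOut K σ') ≤ deltaRead read b ρ σ := not_lt.1 (hRM2 hdis)
      _ ≤ D := deltaRead_le hD fun K hK => hinv K (hba hK)
      _ ≤ D + 2 * ε := by linarith
  · obtain ⟨hρρ', hσσ'⟩ := not_or.1 hdis
    have := traceDist_le_of_le_of_le (hρ.ptrOut K) (hρ'.ptrOut K) (hσ.ptrOut K) (hσ'.ptrOut K)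
      (not_lt.1 hρρ') (hinv K hK) (not_lt.1 hσσ')
    linarith

lemma traceDist_ptrOut_step_le_of_not_flow (hacm : ACMSatisfies A pol read alter) (ha : a ∈ A)
    (hb : b ∈ A) (hba : ¬ pol b a) (hε : 0 ≤ ε)
    (hρ : ρ.IsHermitian) (hσ : σ.IsHermitian) (hρ' : ρ'.IsHermitian)
    (hinv : ∀ K ∈ read a, traceDist (ptrOut K ρ) (ptrOut K σ) ≤ D) (hK : K ∈ read a)
    (hRM3 : Dis K ε ρ ρ' → ∃ L ∈ alter b, (K ∩ L).Nonempty) :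
    traceDist (ptrOut K ρ') (ptrOut K σ) ≤ D + 2 * ε := by
  have := traceDist_le_of_le_of_le (hρ.ptrOut K) (hρ'.ptrOut K) (hσ.ptrOut K) (hσ.ptrOut K)
    (traceDist_ptrOut_le_of_not_flow hacm ha hb hba hK hRM3) (hinv K hK)
    (traceDist_self _).le
  linarith

end AccessControl

lemma purge_sublist {Agent Cmd : Type} (G : Set Agent) (D : Set Cmd) (α : List (Agent × Cmd)) :
    (purge G D α).Sublist α := by
  induction α with
  | nil => exact List.Sublist.slnil
  | cons p α ih =>
    rw [purge]
    split_ifs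
    · exact ih.cons p
    · exact ih.cons_cons p

namespace QSystem

variable {Agent Cmd d : Type} {S : QSystem Agent Cmd d} {α : List (Agent × Cmd)}
  {ρ : Matrix d d ℂ}

lemma Valid.purge (hα : S.Valid α) (G : Set Agent) (D : Set Cmd) :
    S.Valid (_root_.purge G D α) :=
  fun p hp => hα p ((purge_sublist G D α).subset hp)

lemma reachable_ρ0 (S : QSystem Agent Cmd d) : S.Reachable S.ρ0 :=
  ⟨[], List.forall_mem_nil _, rfl⟩

lemma Reachable.ecmd (hρ : S.Reachable ρ) {a : Agent} {c : Cmd} (ha : a ∈ S.A) (hc : c ∈ S.C) :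
    S.Reachable (S.Ecmd a c ρ) := by
  obtain ⟨β, hβ, rfl⟩ := hρ
  refine ⟨β ++ [(a, c)], List.forall_mem_append.2 ⟨hβ, by simpa using ⟨ha, hc⟩⟩, ?_⟩
  rw [run, List.foldl_append]
  rfl

variable [Fintype d] [DecidableEq d]

lemma run_posSemidef (hS : S.WellFormed) (hα : S.Valid α) (hρ : ρ.PosSemidef) :
    (S.run α ρ).PosSemidef := by
  induction α generalizing ρ with
  | nil => exact hρ
  | cons p α ih =>
    obtain ⟨⟨hpA, hpC⟩, hα⟩ := List.forall_mem_cons.1 hα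
    exact ih hα ((hS.2.1 p.1 hpA p.2 hpC).2.1 ρ hρ)

lemma Reachable.isHermitian (hS : S.WellFormed) (hρ : S.Reachable ρ) : ρ.IsHermitian := by
  obtain ⟨α, hα, rfl⟩ := hρ
  exact (run_posSemidef hS hα hS.1.1).isHermitian

end QSystem

section ReferenceMonitor

variable {Agent Cmd N : Type} [Fintype N] [DecidableEq N] {ι : N → Type}
  [∀ n, Fintype (ι n)] [∀ n, DecidableEq (ι n)]

def QSystem.RM2 (S : QSystem Agent Cmd ((n : N) → ι n)) (read : Agent → Set (Finset N))
    (ε : ℝ) : Prop :=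
  ∀ a ∈ S.A, ∀ c ∈ S.C, ∀ ρ σ, S.Reachable ρ → S.Reachable σ → ∀ K : Finset N,
    (Dis K ε ρ (S.Ecmd a c ρ) ∨ Dis K ε σ (S.Ecmd a c σ)) →
    ¬ Dis K (deltaRead read a ρ σ) (S.Ecmd a c ρ) (S.Ecmd a c σ)

def QSystem.RM3 (S : QSystem Agent Cmd ((n : N) → ι n)) (alter : Agent → Set (Finset N))
    (ε : ℝ) : Prop :=
  ∀ a ∈ S.A, ∀ c ∈ S.C, ∀ ρ, S.Reachable ρ → ∀ K : Finset N,
    Dis K ε ρ (S.Ecmd a c ρ) → ∃ L ∈ alter a, (K ∩ L).Nonempty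

theorem QSystem.traceDist_ptrOut_run_purge_le {S : QSystem Agent Cmd ((n : N) → ι n)}
    (hS : S.WellFormed) {pol : Agent → Agent → Prop} {read alter : Agent → Set (Finset N)}
    (hacm : ACMSatisfies S.A pol read alter) {ε : ℝ} (hε : 0 ≤ ε) (hRM2 : S.RM2 read ε)
    (hRM3 : S.RM3 alter ε) {a : Agent} (ha : a ∈ S.A) {α : List (Agent × Cmd)}
    (hα : S.Valid α) {ρ σ : Matrix ((n : N) → ι n) ((n : N) → ι n) ℂ}
    (hρ : S.Reachable ρ) (hσ : S.Reachable σ) {D : ℝ} (hD : 0 ≤ D)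
    (hinv : ∀ K ∈ read a, traceDist (ptrOut K ρ) (ptrOut K σ) ≤ D) :
    ∀ K ∈ read a, traceDist (ptrOut K (S.run α ρ))
      (ptrOut K (S.run (purge (nabla pol a) Set.univ α) σ)) ≤ D + 2 * α.length * ε := by
  induction α generalizing ρ σ D with
  | nil => simpa [run, purge] using hinv
  | cons p α ih =>
    obtain ⟨⟨hpA, hpC⟩, hα⟩ := List.forall_mem_cons.1 hα
    have hρ' := hρ.ecmd hpA hpC
    have hlen : D + 2 * ((p :: α).length : ℝ) * ε = D + 2 * ε + 2 * α.length * ε := by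
      rw [List.length_cons, Nat.cast_succ]
      ring
    rw [hlen]
    by_cases hpa : pol p.1 a
    · rw [purge, if_neg fun h => h.1 hpa]
      exact ih hα hρ' (hσ.ecmd hpA hpC) (by linarith) fun K hK =>
        traceDist_ptrOut_step_le_of_flow (hacm.1 _ hpA a ha hpa) hε hD (hρ.isHermitian hS)
          (hσ.isHermitian hS) (hρ'.isHermitian hS) ((hσ.ecmd hpA hpC).isHermitian hS) hinv hK
          (hRM2 _ hpA _ hpC ρ σ hρ hσ K)
    · rw [purge, if_pos ⟨hpa, Set.mem_univ _⟩]
      exact ih hα hρ' hσ (by linarith) fun K hK =>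
        traceDist_ptrOut_step_le_of_not_flow hacm ha hpA hpa hε (hρ.isHermitian hS)
          (hσ.isHermitian hS) (hρ'.isHermitian hS) hinv hK (hRM3 _ hpA _ hpC ρ hρ K)

end ReferenceMonitor

theorem access_control_security_general {Agent Cmd N : Type} [Fintype N] [DecidableEq N]
    {ι : N → Type} [∀ n, Fintype (ι n)] [∀ n, DecidableEq (ι n)]
    (S : QSystem Agent Cmd ((n : N) → ι n)) (hS : S.WellFormed)
    (pol : Agent → Agent → Prop)
    (read alter : Agent → Set (Finset N))
    (hacm : ACMSatisfies S.A pol read alter)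
    (θ ε : ℝ) (hθ : 0 ≤ θ) (hε : 0 ≤ ε) (t : ℕ)
    (RM1 : ∀ a ∈ S.A, ∀ ρ σ, S.Reachable ρ → S.Reachable σ →
      dM (S.M a) ρ σ ≤ deltaRead read a ρ σ + θ)
    (RM2 : ∀ a ∈ S.A, ∀ c ∈ S.C, ∀ ρ σ, S.Reachable ρ → S.Reachable σ →
      ∀ K : Finset N,
        (Dis K ε ρ (S.Ecmd a c ρ) ∨ Dis K ε σ (S.Ecmd a c σ)) →
        ¬ Dis K (deltaRead read a ρ σ) (S.Ecmd a c ρ) (S.Ecmd a c σ))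
    (RM3 : ∀ a ∈ S.A, ∀ c ∈ S.C, ∀ ρ, S.Reachable ρ → ∀ K : Finset N,
      Dis K ε ρ (S.Ecmd a c ρ) → ∃ L ∈ alter a, (K ∩ L).Nonempty) :
    Kt S pol t ≤ θ + 2 * t * ε := by
  refine Real.sSup_le ?_ (by positivity)
  rintro x ⟨a, ha, α, hα, hlen, rfl⟩
  have hδ : deltaRead read a (S.run α S.ρ0) (S.run (purge (nabla pol a) Set.univ α) S.ρ0)
      ≤ 2 * α.length * ε := by
    refine deltaRead_le (by positivity) fun K hK => ?_
    simpa using S.traceDist_ptrOut_run_purge_le hS hacm hε RM2 RM3 ha hα S.reachable_ρ0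
      S.reachable_ρ0 le_rfl (fun K _ => (traceDist_self _).le) K hK
  have hαt : 2 * (α.length : ℝ) * ε ≤ 2 * t * ε := by gcongr
  have hmeas := RM1 a ha _ _ ⟨α, hα, rfl⟩ ⟨_, hα.purge (nabla pol a) Set.univ, rfl⟩
  linarith

/-- **Security of quantum access control.** If the access control matrix satisfies the
policy and the Reference Monitor Assumptions (RM1)–(RM3) hold, then
`K_t(𝕊,↝) ≤ θ + 2tε`. -/
theorem access_control_security {Agent Cmd N : Type} [Fintype N] [DecidableEq N]
    {ι : N → Type} [∀ n, Fintype (ι n)] [∀ n, DecidableEq (ι n)]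
    [∀ n, Nonempty (ι n)]
    (S : QSystem Agent Cmd ((n : N) → ι n)) (hS : S.WellFormed)
    (pol : Agent → Agent → Prop) (hpol : ∀ a ∈ S.A, pol a a)
    (read alter : Agent → Set (Finset N))
    (hread : ∀ a ∈ S.A, BelowClosed (read a))
    (halter : ∀ a ∈ S.A, BelowClosed (alter a))
    (hacm : ACMSatisfies S.A pol read alter)
    (θ ε : ℝ) (hθ : 0 ≤ θ) (hε : 0 ≤ ε) (t : ℕ)
    (RM1 : ∀ a ∈ S.A, ∀ ρ σ, S.Reachable ρ → S.Reachable σ →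
      dM (S.M a) ρ σ ≤ deltaRead read a ρ σ + θ)
    (RM2 : ∀ a ∈ S.A, ∀ c ∈ S.C, ∀ ρ σ, S.Reachable ρ → S.Reachable σ →
      ∀ K : Finset N,
        (Dis K ε ρ (S.Ecmd a c ρ) ∨ Dis K ε σ (S.Ecmd a c σ)) →
        ¬ Dis K (deltaRead read a ρ σ) (S.Ecmd a c ρ) (S.Ecmd a c σ))
    (RM3 : ∀ a ∈ S.A, ∀ c ∈ S.C, ∀ ρ, S.Reachable ρ → ∀ K : Finset N,
      Dis K ε ρ (S.Ecmd a c ρ) → ∃ L ∈ alter a, (K ∩ L).Nonempty) :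
    Kt S pol t ≤ θ + 2 * t * ε :=
  access_control_security_general S hS pol read alter hacm θ ε hθ hε t RM1 RM2 RM3

end
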